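/- arXiv:1007.3692 — 2 statements merged into one kernel-verified Lean document; each statement's English description precedes it below -/
import Mathlib

section
/- Let k > 0 and let A ⊆ ℕ be ω^k-c.e. Then A^b is ω^{k+1}-c.e. -/
open Classical

/-- Characteristic function of a set of naturals (values in `{0,1}`). -/
noncomputable def chi (A : Set ℕ) (n : ℕ) : ℕ := if n ∈ A then 1 else 0

/-- An acceptable enumeration `φ_e` of the partial computable functions,
via Mathlib's codes for partial recursive functions. -/
def phi (e : ℕ) : ℕ →. ℕ := (Denumerable.ofNat Nat.Partrec.Code e).eval

/-- The initial segment of (the characteristic function of) `A` of length `n`,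
as a list of naturals. -/
noncomputable def initSeg (A : Set ℕ) (n : ℕ) : List ℕ := (List.range n).map (chi A)

/-- An effective enumeration `Φ_e` of the Turing functionals: the `e`-th functional
with oracle `A` on input `x` converges iff the `e`-th partial computable function halts
on `(σ, x)` for some initial segment `σ` of `A`; its value is obtained from the least
such initial segment. -/
noncomputable def Phi (e : ℕ) (A : Set ℕ) (x : ℕ) : Part ℕ :=
  ⟨∃ n, (phi e (Nat.pair (Encodable.encode (initSeg A n)) x)).Dom,
   fun h => (phi e (Nat.pair (Encodable.encode (initSeg A (Nat.find h))) x)).get (Nat.find_spec h)⟩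

/-- `A↾n = {m ∈ A : m ≤ n}`. -/
def restrictTo (A : Set ℕ) (n : ℕ) : Set ℕ := {m | m ∈ A ∧ m ≤ n}

/-- The bounded jump `A^b = {x : ∃ i ≤ x, φ_i(x)↓ ∧ Φ_x^{A↾φ_i(x)}(x)↓}`. -/
def bJump (A : Set ℕ) : Set ℕ :=
  {x | ∃ i ≤ x, ∃ h : (phi i x).Dom, (Phi x (restrictTo A ((phi i x).get h)) x).Dom}

/-- `A^{b₀} = {⟨e,i,j⟩ : φ_i(j)↓ ∧ Φ_e^{A↾φ_i(j)}(j)↓}`, coding triples with `Nat.pair`. -/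
def b0Jump (A : Set ℕ) : Set ℕ :=
  {n | ∃ e i j, n = Nat.pair e (Nat.pair i j) ∧
        ∃ h : (phi i j).Dom, (Phi e (restrictTo A ((phi i j).get h)) j).Dom}

/-- The simple jump `A^i = {x : Φ_x^{A↾x}(x)↓}`. -/
def iJump (A : Set ℕ) : Set ℕ := {x | (Phi x (restrictTo A x) x).Dom}

/-- `∅^{nb}`, the `n`-th iterate of the bounded jump of the empty set. -/
def bIter : ℕ → Set ℕ
  | 0 => (∅ : Set ℕ)
  | n + 1 => bJump (bIter n)

/-- The halting set `∅′ = {x : φ_x(x)↓}`. -/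
def K : Set ℕ := {x | (phi x x).Dom}

/-- The effective join `A ⊕ B = {2n : n ∈ A} ∪ {2n+1 : n ∈ B}`. -/
def join (A B : Set ℕ) : Set ℕ :=
  {n | (∃ m ∈ A, n = 2 * m) ∨ (∃ m ∈ B, n = 2 * m + 1)}

/-- `X ≤₁ Y`: one-reducibility via a total computable injection. -/
def oneReducible (X Y : Set ℕ) : Prop :=
  ∃ f : ℕ → ℕ, Computable f ∧ Function.Injective f ∧ ∀ x, x ∈ X ↔ f x ∈ Y

/-- `X ≤_bT Y`: bounded Turing (weak truth-table) reducibility. There are indices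
`e, j` with `φ_j` total such that `X(x) = Φ_e^{Y↾φ_j(x)}(x)` for all `x`. -/
def bTReducible (X Y : Set ℕ) : Prop :=
  ∃ e j, ∃ h : ∀ x, (phi j x).Dom,
    ∀ x, Phi e (restrictTo Y ((phi j x).get (h x))) x = Part.some (chi X x)

/-- `X ≤_T Y`: Turing reducibility. -/
def TReducible (X Y : Set ℕ) : Prop :=
  ∃ e, ∀ x, Phi e Y x = Part.some (chi X x)

/-- `X ≤_tt Y`: truth-table reducibility, i.e. Turing reducibility via a functional
that is total on all oracles. -/
def ttReducible (X Y : Set ℕ) : Prop :=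
  ∃ e, (∀ B : Set ℕ, ∀ x, (Phi e B x).Dom) ∧ ∀ x, Phi e Y x = Part.some (chi X x)

/-- `A` is `ω^k`-c.e.: ordinals below `ω^k` are coded by their lists of Cantor normal
form coefficients (length-`k` lists of naturals, most significant first), ordered
lexicographically.  There is a partial computable `ψ : ℕ × ω^k → {0,1}` such that for
every `n` some `ψ(n,β)` converges, and `A(n) = ψ(n,γ)` for the least converging `γ`. -/
def OmegaCE (k : ℕ) (A : Set ℕ) : Prop :=
  ∃ ψ : ℕ →. ℕ, Partrec ψ ∧ (∀ m y, y ∈ ψ m → y ≤ 1) ∧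
    ∀ n : ℕ, ∃ l : List ℕ, l.length = k ∧
      (∀ l' : List ℕ, l'.length = k → List.Lex (· < ·) l' l →
        ¬ (ψ (Nat.pair n (Encodable.encode l'))).Dom) ∧
      chi A n ∈ ψ (Nat.pair n (Encodable.encode l))

/-- The (lightface) `Σ_n` sets of naturals. -/
def SigmaN : ℕ → Set ℕ → Prop
  | 0 => fun S => ComputablePred (· ∈ S)
  | n + 1 => fun S => ∃ R : Set ℕ, SigmaN n R ∧ S = {x | ∃ y, Nat.pair x y ∉ R}

/-- The initial segment of `A` of length `n`, as a finite binary string. -/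
noncomputable def initSegB (A : Set ℕ) (n : ℕ) : List Bool :=
  (List.range n).map fun i => decide (i ∈ A)

/-- `A` is `n`-generic: for every `Σ_n` set `S` of (codes of) finite binary strings,
either some initial segment of `A` is in `S`, or some initial segment of `A` has no
extension in `S`. -/
def NGeneric (n : ℕ) (A : Set ℕ) : Prop :=
  ∀ S : Set ℕ, SigmaN n S →
    (∃ l, Encodable.encode (initSegB A l) ∈ S) ∨
    (∃ l, ∀ τ : List Bool, initSegB A l <+: τ → Encodable.encode τ ∉ S)

/-- The open subset of Cantor space generated by the set of strings `U` has measure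
`≤ 2^{-i}`: for every `n`, at most `2^n/2^i` strings of length `n` extend a string
of `U`. -/
def stringMeasureLe (U : Set (List Bool)) (i : ℕ) : Prop :=
  ∀ n : ℕ, ({σ : List Bool | σ.length = n ∧ ∃ τ ∈ U, τ <+: σ}.ncard) * 2 ^ i ≤ 2 ^ n

/-- `A` is `n`-random: for every uniformly `Σ_n` family `⟨U_i⟩` of sets of (codes of)
finite binary strings with `μ(U_i) ≤ 2^{-i}`, there is an `l` such that no initial
segment of `A` lies in `U_l`. -/
def NRandom (n : ℕ) (A : Set ℕ) : Prop :=
  ∀ U : Set ℕ, SigmaN n U →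
    (∀ i, stringMeasureLe {σ : List Bool | Nat.pair i (Encodable.encode σ) ∈ U} i) →
    ∃ l, ∀ m, Nat.pair l (Encodable.encode (initSegB A m)) ∉ U

/-- The code `c` codes a tt-condition (a finite sequence of positions together with a
truth table) satisfied by `A`. -/
def ttSatisfied (A : Set ℕ) (c : ℕ) : Prop :=
  ∃ p : List ℕ × List Bool, Encodable.decode c = some p ∧
    p.2.length = 2 ^ p.1.length ∧
    p.2.getD (p.1.foldr (fun x acc => 2 * acc + chi A x) 0) false = true

/-- `A^{tt}`: the set of codes of tt-conditions satisfied by `A`. -/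
def ttSet (A : Set ℕ) : Set ℕ := {c | ttSatisfied A c}

/-- Gerla's truth-table jump `A_tt = {x : φ_x(x)↓ ∧ φ_x(x) ∈ A^{tt}}`. -/
def gerlaJump (A : Set ℕ) : Set ℕ :=
  {x | ∃ h : (phi x x).Dom, (phi x x).get h ∈ ttSet A}

/-!
For each `x` we compute a counter `c(x, s)`: a list of length `k + 1`, read lexicographically as
an ordinal below `ω^(k+1)`, that never increases with `s`. Its first entry counts the indices
`i ≤ x` for which no use `u = φ_i(x)` has been found yet (together with current approximations to
`A(m)` for all `m ≤ u`). The other `k` entries are the componentwise (natural) sum, over all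
`m` below a found use, of the least `ω^k`-index at which the given approximation to `A(m)` has
converged by stage `s`; finally the last entry is doubled and increased by `1` unless some
computation `Φ_x(x)` has been seen to halt on the current approximation to `A↾u`. Each summand
can only decrease, and while the uses and the summands stay put this bit can only switch on;
doubling keeps every other change a strict decrease. Lexicographic order on lists of a fixed
length is well founded, so the counter stabilises, and its limit carries the right bit because
below the finitely many uses the approximations to `A` are eventually correct. The
`ω^(k+1)`-approximation to `A^b` answers at `(x, l)` with the bit of `l` once the counter of `x`
has visited `l`.
-/

open Filter Encodable Denumerable
open Nat.Partrec (Code)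
open Nat.Partrec.Code (evaln evaln_mono evaln_sound evaln_complete primrec_evaln)

namespace List

theorem lt_iff_exists_take_eq {l l' : List ℕ} :
    l < l' ↔ ∃ i < l'.length, l.take i = l'.take i ∧ (l.length ≤ i ∨ l.getI i < l'.getI i) := by
  induction l generalizing l' with
  | nil => cases l' <;> simp
  | cons a t ih =>
    cases l' with
    | nil => simp
    | cons b t' =>
      rw [cons_lt_cons_iff, length_cons, Nat.exists_lt_succ_left, ih]
      simp only [take_zero, take_succ_cons, cons.injEq, length_cons, getI_cons_zero,
        getI_cons_succ, true_and, Nat.succ_le_succ_iff, and_assoc]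
      grind

theorem zipWith_eq_map_range {α β γ : Type*} [Inhabited α] [Inhabited β] (f : α → β → γ)
    (l : List α) (l' : List β) :
    zipWith f l l' = (range (min l.length l'.length)).map fun i => f (l.getI i) (l'.getI i) := by
  refine ext_getElem (by simp) fun i h₁ h₂ => ?_
  simp only [length_zipWith, lt_min_iff] at h₁
  simp [getI_eq_getElem _ h₁.1, getI_eq_getElem _ h₁.2]

theorem zipWith_add_lt_of_lt_of_le {a a' b b' : List ℕ} (ha : a'.length = a.length)
    (hb : b'.length = b.length) (hab : a.length = b.length) (h₁ : a' < a) (h₂ : b' ≤ b) :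
    zipWith (· + ·) a' b' < zipWith (· + ·) a b := by
  induction a generalizing a' b b' with
  | nil => exact absurd h₁ (not_lt_nil _)
  | cons x t ih =>
    obtain ⟨x', t', rfl⟩ := exists_cons_of_length_eq_add_one ha
    obtain ⟨y, u, rfl⟩ := exists_cons_of_length_eq_add_one hab.symm
    obtain ⟨y', u', rfl⟩ := exists_cons_of_length_eq_add_one hb
    simp only [length_cons, Nat.add_right_cancel_iff] at ha hb hab
    replace h₂ : y' < y ∨ y' = y ∧ u' ≤ u := by
      rcases h₂.lt_or_eq with h | h
      · exact (cons_lt_cons_iff.1 h).imp_right fun h => ⟨h.1, h.2.le⟩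
      · exact .inr ⟨(cons.inj h).1, (cons.inj h).2.le⟩
    simp only [zipWith_cons_cons, cons_lt_cons_iff] at h₁ ⊢
    rcases h₁ with hx | ⟨rfl, ht⟩
    · exact .inl (by omega)
    · rcases h₂ with hy | ⟨rfl, hu⟩
      · exact .inl (by omega)
      · exact .inr ⟨rfl, ih ha hb hab ht hu⟩

theorem zipWith_add_lt_or_eq {a a' b b' : List ℕ} (ha : a'.length = a.length)
    (hb : b'.length = b.length) (hab : a.length = b.length) (h₁ : a' ≤ a) (h₂ : b' ≤ b) :
    zipWith (· + ·) a' b' < zipWith (· + ·) a b ∨ a' = a ∧ b' = b := by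
  rcases h₁.lt_or_eq with h₁ | rfl
  · exact .inl (zipWith_add_lt_of_lt_of_le ha hb hab h₁ h₂)
  rcases h₂.lt_or_eq with h₂ | rfl
  · rw [zipWith_comm_of_comm Nat.add_comm (l := a'), zipWith_comm_of_comm Nat.add_comm (l := a')]
    exact .inl (zipWith_add_lt_of_lt_of_le hb ha hab.symm h₂ le_rfl)
  · exact .inr ⟨rfl, rfl⟩

theorem length_foldr_zipWith_add {k : ℕ} (vs : List (List ℕ)) (h : ∀ v ∈ vs, v.length = k) :
    (vs.foldr (zipWith (· + ·)) (replicate k 0)).length = k := by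
  induction vs with
  | nil => simp
  | cons v vs ih => simp_all

theorem foldr_zipWith_add_lt_or_eq {k : ℕ} {L : List ℕ} {g g' : ℕ → List ℕ}
    (hg : ∀ m ∈ L, (g m).length = k) (hg' : ∀ m ∈ L, (g' m).length = k)
    (h : ∀ m ∈ L, g' m ≤ g m) :
    (L.map g').foldr (zipWith (· + ·)) (replicate k 0) <
        (L.map g).foldr (zipWith (· + ·)) (replicate k 0) ∨ ∀ m ∈ L, g' m = g m := by
  induction L with
  | nil => simp
  | cons m L ih =>
    simp only [mem_cons, forall_eq_or_imp, map_cons, foldr_cons] at hg hg' h ⊢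
    have hlen : ∀ g : ℕ → List ℕ, (∀ m ∈ L, (g m).length = k) →
        ((L.map g).foldr (zipWith (· + ·)) (replicate k 0)).length = k := fun g hg =>
      length_foldr_zipWith_add _ (by simpa using hg)
    have htail := ih hg.2 hg'.2 h.2
    rcases zipWith_add_lt_or_eq (by rw [hg.1, hg'.1]) (by rw [hlen g hg.2, hlen g' hg'.2])
      (by rw [hg.1, hlen g hg.2]) h.1 (htail.elim le_of_lt fun h => map_congr_left h ▸ le_rfl)
      with hlt | ⟨hm, hL⟩
    · exact .inl hlt
    · refine .inr ⟨hm, htail.resolve_left (hL ▸ lt_irrefl _)⟩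

def markLast (e : ℕ) (l : List ℕ) : List ℕ := (l.reverse.modifyHead (2 * · + e)).reverse

@[simp] theorem markLast_singleton (e a : ℕ) : markLast e [a] = [2 * a + e] := rfl

theorem markLast_cons (e a : ℕ) {l : List ℕ} (hl : l ≠ []) :
    markLast e (a :: l) = a :: markLast e l := by
  obtain ⟨b, r, hr⟩ := exists_cons_of_ne_nil (reverse_ne_nil_iff.2 hl)
  simp [markLast, hr]

@[simp] theorem length_markLast (e : ℕ) (l : List ℕ) : (markLast e l).length = l.length := by
  simp [markLast]

theorem reverse_headI_markLast (e : ℕ) {l : List ℕ} (hl : l ≠ []) :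
    (markLast e l).reverse.headI = 2 * l.reverse.headI + e := by
  obtain ⟨b, r, hr⟩ := exists_cons_of_ne_nil (reverse_ne_nil_iff.2 hl)
  simp [markLast, hr]

theorem markLast_lt_markLast {l l' : List ℕ} {e e' : ℕ} (he' : e' ≤ 1)
    (hlen : l'.length = l.length) (h : l' < l) : markLast e' l' < markLast e l := by
  induction l generalizing l' with
  | nil => exact absurd h (not_lt_nil _)
  | cons a t ih =>
    obtain ⟨a', t', rfl⟩ := exists_cons_of_length_eq_add_one hlen
    simp only [length_cons, Nat.add_right_cancel_iff] at hlen
    rcases eq_or_ne t [] with rfl | ht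
    · obtain rfl := length_eq_zero_iff.1 hlen
      simp only [markLast_singleton, cons_lt_cons_iff, not_lt_nil, and_false, or_false] at h ⊢
      omega
    · have ht' : t' ≠ [] := ne_nil_of_length_pos (hlen ▸ length_pos_of_ne_nil ht)
      rw [markLast_cons e a ht, markLast_cons e' a' ht']
      exact cons_lt_cons_iff.2 ((cons_lt_cons_iff.1 h).imp_right fun h => ⟨h.1, ih hlen h.2⟩)

theorem markLast_le_markLast {e e' : ℕ} (h : e' ≤ e) (l : List ℕ) :
    markLast e' l ≤ markLast e l := by
  induction l with
  | nil => exact le_rfl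
  | cons a t ih =>
    rcases eq_or_ne t [] with rfl | ht
    · rcases h.lt_or_eq with h | rfl
      · rw [markLast_singleton, markLast_singleton]
        exact le_of_lt (cons_lt_cons_iff.2 (.inl (by omega)))
      · exact le_rfl
    · rw [markLast_cons e a ht, markLast_cons e' a ht]
      exact cons_le_cons a ih

theorem countP_isNone_lt_or_eq {α β : Type*} {L : List α} {f g : α → Option β}
    (h : ∀ i ∈ L, ∀ u, f i = some u → g i = some u) :
    L.countP (fun i => (g i).isNone) < L.countP (fun i => (f i).isNone) ∨ ∀ i ∈ L, g i = f i := by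
  induction L with
  | nil => simp
  | cons a L ih =>
    simp only [mem_cons, forall_eq_or_imp] at h ⊢
    have hle := countP_mono_left (l := L) (p := fun i => (g i).isNone)
      (q := fun i => (f i).isNone) fun i hi hg => by
        cases hf : f i with
        | none => rfl
        | some u => simp [h.2 i hi u hf] at hg
    cases hf : f a with
    | some u => simpa [countP_cons, hf, h.1 u hf] using ih h.2
    | none =>
      cases hg : g a with
      | none => simpa [countP_cons, hf, hg] using ih h.2
      | some v => exact .inl (by simp [hf, hg]; omega)

end List

section Primrec

open Primrec

theorem Primrec.list_zipWith {α β σ : Type*} [Primcodable α] [Primcodable β] [Primcodable σ]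
    [Inhabited α] [Inhabited β] {f : α → β → σ} (hf : Primrec₂ f) :
    Primrec₂ (List.zipWith f) :=
  (list_map (list_range.comp (nat_min.comp (list_length.comp fst) (list_length.comp snd)))
    (hf.comp (list_getI.comp (fst.comp fst) snd) (list_getI.comp (snd.comp fst) snd)).to₂).of_eq
    fun p => (List.zipWith_eq_map_range f p.1 p.2).symm

theorem PrimrecRel.list_lt : PrimrecRel ((· < ·) : List ℕ → List ℕ → Prop) := by
  have hR : PrimrecRel fun (i : ℕ) (p : List ℕ × List ℕ) =>
      p.1.take i = p.2.take i ∧ (p.1.length ≤ i ∨ p.1.getI i < p.2.getI i) :=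
    (Primrec.eq.comp (list_take.comp fst (fst.comp snd)) (list_take.comp fst (snd.comp snd))).and
      ((nat_le.comp (list_length.comp (fst.comp snd)) fst).or
        (nat_lt.comp (list_getI.comp (fst.comp snd) fst) (list_getI.comp (snd.comp snd) fst)))
  exact (hR.exists_mem_list.comp (list_range.comp (list_length.comp snd)) Primrec.id).of_eq
    fun p => by simp [List.lt_iff_exists_take_eq (l := p.1)]

theorem Primrec.list_min : Primrec₂ (min : List ℕ → List ℕ → List ℕ) :=
  (Primrec.ite (PrimrecRel.list_lt.comp fst snd) fst snd).of_eq fun p => by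
    rw [min_def_lt]; congr

theorem Primrec.list_min? : Primrec (List.min? : List (List ℕ) → Option (List ℕ)) :=
  (list_casesOn .id (const none) (option_some.comp (list_foldl (snd.comp snd) (fst.comp snd)
    (list_min.comp (fst.comp snd) (snd.comp snd)).to₂)).to₂).of_eq fun l => by
    cases l with
    | nil => rfl
    | cons a l => rw [List.min?_cons']; rfl

theorem Primrec.list_filter {α β : Type*} [Primcodable α] [Primcodable β] {f : α → List β}
    {p : α → β → Bool} (hf : Primrec f) (hp : Primrec₂ p) :
    Primrec fun a => (f a).filter (p a) :=
  (listFilterMap hf (Primrec.cond hp (option_some.comp snd) (const none)).to₂).of_eq fun a => by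
    rw [← List.filterMap_eq_filter]
    congr
    funext b
    cases h : p a b <;> simp [Option.guard, h]

theorem Primrec.list_markLast : Primrec₂ List.markLast :=
  (list_reverse.comp ((list_modifyHead' (nat_add.comp (nat_mul.comp (const 2) snd) fst).to₂).comp
    (list_reverse.comp snd) fst)).to₂

end Primrec

theorem chi_restrictTo (A : Set ℕ) (u m : ℕ) :
    chi (restrictTo A u) m = if m ≤ u then chi A m else 0 := by
  by_cases hm : m ≤ u <;> simp [chi, restrictTo, hm]

theorem Filter.eventually_forall_le_atTop {p : ℕ → ℕ → Prop} (h : ∀ m, ∀ᶠ s in atTop, p m s)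
    (n : ℕ) : ∀ᶠ s in atTop, ∀ m ≤ n, p m s :=
  (eventually_all_finite (Set.finite_Iic n)).2 fun m _ => h m

theorem exists_eventually_eq_of_antitone {k : ℕ} {c : ℕ → List ℕ}
    (hlen : ∀ s, (c s).length = k) (hc : Antitone c) : ∃ L, ∀ᶠ s in atTop, c s = L := by
  obtain ⟨_, ⟨S, rfl⟩, hmin⟩ :=
    (List.Shortlex.wf wellFounded_lt).has_min (Set.range c) ⟨_, 0, rfl⟩
  refine ⟨c S, eventually_atTop.2 ⟨S, fun s hs => (hc hs).antisymm ?_⟩⟩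
  exact not_lt.1 fun h => hmin _ ⟨s, rfl⟩ ((List.shortlex_iff_lex (by rw [hlen, hlen])).2 h)

def valueOnVisit (c : ℕ → ℕ → List ℕ) (f : List ℕ → ℕ) : ℕ →. ℕ := fun z =>
  (Nat.rfind fun s => Part.some (decide (c z.unpair.1 s = ofNat (List ℕ) z.unpair.2))).map
    fun _ => f (ofNat (List ℕ) z.unpair.2)

theorem mem_valueOnVisit {c : ℕ → ℕ → List ℕ} {f : List ℕ → ℕ} {n y : ℕ} {l : List ℕ} :
    y ∈ valueOnVisit c f (Nat.pair n (encode l)) ↔ (∃ s, c n s = l) ∧ f l = y := by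
  simp only [valueOnVisit, Nat.unpair_pair, ofNat_encode, Part.mem_map_iff, exists_and_right,
    ← Part.dom_iff_mem]
  refine and_congr_left fun _ => ⟨fun h => ?_, fun ⟨s, hs⟩ =>
    Nat.rfind_dom.2 ⟨s, by simpa using hs, fun _ => trivial⟩⟩
  obtain ⟨s, hs⟩ := Part.dom_iff_mem.1 h
  exact ⟨s, by simpa using Nat.rfind_spec hs⟩

theorem Partrec.valueOnVisit {c : ℕ → ℕ → List ℕ} {f : List ℕ → ℕ} (hc : Computable₂ c)
    (hf : Computable f) : Partrec (valueOnVisit c f) := by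
  have hl : Computable fun z : ℕ => ofNat (List ℕ) z.unpair.2 :=
    ((Primrec.ofNat _).comp (Primrec.snd.comp Primrec.unpair)).to_comp
  have hvisit : Computable₂ fun z s : ℕ => decide (c z.unpair.1 s = ofNat (List ℕ) z.unpair.2) :=
    Primrec.eq.decide.to_comp.comp
      (hc.comp (Computable.fst.comp (Computable.unpair.comp .fst)) .snd) (hl.comp .fst)
  exact (Partrec.rfind hvisit.partrec₂).map (hf.comp (hl.comp .fst)).to₂

theorem omegaCE_of_antitone {k : ℕ} {B : Set ℕ} {c : ℕ → ℕ → List ℕ} {f : List ℕ → ℕ}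
    (hc : Computable₂ c) (hf : Computable f) (hf₁ : ∀ l, f l ≤ 1)
    (hlen : ∀ n s, (c n s).length = k) (hanti : ∀ n, Antitone (c n))
    (hlim : ∀ n, ∀ᶠ s in atTop, f (c n s) = chi B n) : OmegaCE k B := by
  refine ⟨valueOnVisit c f, .valueOnVisit hc hf, ?_, fun n => ?_⟩
  · intro z y hy
    obtain ⟨_, -, rfl⟩ := Part.mem_map_iff _ |>.1 hy
    exact hf₁ _
  obtain ⟨L, hL⟩ := exists_eventually_eq_of_antitone (hlen n) (hanti n)
  obtain ⟨S, hS⟩ := (hL.and (hlim n)).exists_forall_of_atTop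
  obtain ⟨hSL, hSf⟩ := hS S le_rfl
  refine ⟨L, hSL ▸ hlen n S, fun l' _ hlt hdom => ?_, mem_valueOnVisit.2 ⟨⟨S, hSL⟩, hSL ▸ hSf⟩⟩
  obtain ⟨y, hy⟩ := Part.dom_iff_mem.1 hdom
  obtain ⟨⟨s, rfl⟩, -⟩ := mem_valueOnVisit.1 hy
  have h := hanti n (le_max_left s S)
  rw [(hS _ (le_max_right s S)).1] at h
  exact lt_irrefl _ (lt_of_lt_of_le hlt h)

def OmegaApprox (k : ℕ) (ψ : ℕ →. ℕ) (A : Set ℕ) : Prop :=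
  ∀ n : ℕ, ∃ l : List ℕ, l.length = k ∧
    (∀ l' : List ℕ, l'.length = k → List.Lex (· < ·) l' l → ¬ (ψ (Nat.pair n (encode l'))).Dom) ∧
    chi A n ∈ ψ (Nat.pair n (encode l))

namespace OmegaApprox

variable (k : ℕ) (c : Code)

def candidates (m s : ℕ) : List (List ℕ) :=
  ((List.range (s + 1)).map (ofNat (List ℕ))).filter fun l =>
    decide (l.length = k) && (evaln s c (Nat.pair m (encode l))).isSome

def approx (m s : ℕ) : Option (List ℕ) := (candidates k c m s).min?

def guess (m s : ℕ) : ℕ := ((approx k c m s).bind fun l => evaln s c (Nat.pair m (encode l))).getD 0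

variable {k c} {m s t : ℕ} {l : List ℕ}

theorem mem_candidates : l ∈ candidates k c m s ↔
    encode l ≤ s ∧ l.length = k ∧ (evaln s c (Nat.pair m (encode l))).isSome := by
  simp only [candidates, List.mem_filter, List.mem_map, List.mem_range, Nat.lt_succ_iff,
    Bool.and_eq_true, decide_eq_true_eq]
  constructor
  · rintro ⟨⟨j, hj, rfl⟩, h⟩
    exact ⟨(encode_ofNat (α := List ℕ) j).symm ▸ hj, h⟩
  · rintro ⟨hl, h⟩
    exact ⟨⟨encode l, hl, ofNat_encode l⟩, h⟩

theorem candidates_mono (hst : s ≤ t) (h : l ∈ candidates k c m s) : l ∈ candidates k c m t := by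
  obtain ⟨hl, hk, hev⟩ := mem_candidates.1 h
  obtain ⟨v, hv⟩ := Option.isSome_iff_exists.1 hev
  exact mem_candidates.2 ⟨hl.trans hst, hk, Option.isSome_iff_exists.2 ⟨v, evaln_mono hst hv⟩⟩

theorem approx_eq_some_iff : approx k c m s = some l ↔
    l ∈ candidates k c m s ∧ ∀ l' ∈ candidates k c m s, l ≤ l' :=
  List.min?_eq_some_iff

theorem length_of_approx_eq_some (h : approx k c m s = some l) : l.length = k :=
  (mem_candidates.1 (approx_eq_some_iff.1 h).1).2.1

theorem exists_approx_le (hst : s ≤ t) (h : approx k c m s = some l) :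
    ∃ l', approx k c m t = some l' ∧ l' ≤ l := by
  have hl := candidates_mono hst (approx_eq_some_iff.1 h).1
  obtain ⟨l', hl'⟩ := Option.isSome_iff_exists.1 (List.isSome_min?_of_mem hl)
  exact ⟨l', hl', (approx_eq_some_iff.1 hl').2 l hl⟩

theorem guess_succ_of_approx_succ (h : approx k c m (s + 1) = approx k c m s) :
    guess k c m (s + 1) = guess k c m s := by
  rw [guess, guess, h]
  cases hs : approx k c m s with
  | none => rfl
  | some l =>
    obtain ⟨v, hv⟩ := Option.isSome_iff_exists.1 (mem_candidates.1 (approx_eq_some_iff.1 hs).1).2.2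
    have hv' : evaln (s + 1) c (Nat.pair m (encode l)) = some v := evaln_mono s.le_succ hv
    simp [hv, hv']

variable {A : Set ℕ}

theorem eventually_guess_eq (hA : OmegaApprox k c.eval A) (m : ℕ) :
    ∀ᶠ s in atTop, (approx k c m s).isSome ∧ guess k c m s = chi A m := by
  obtain ⟨L, hL, hbelow, hmem⟩ := hA m
  obtain ⟨t, ht⟩ := evaln_complete.1 hmem
  filter_upwards [eventually_ge_atTop (max t (encode L))] with s hs
  have hts := evaln_mono (le_of_max_le_left hs) ht
  have hLs : L ∈ candidates k c m s :=
    mem_candidates.2 ⟨le_of_max_le_right hs, hL, Option.isSome_iff_exists.2 ⟨_, hts⟩⟩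
  obtain ⟨l, hl⟩ : ∃ l, approx k c m s = some l :=
    Option.isSome_iff_exists.1 (List.isSome_min?_of_mem hLs)
  obtain ⟨hlmem, hlmin⟩ := approx_eq_some_iff.1 hl
  obtain rfl : l = L := by
    refine (hlmin L hLs).antisymm (not_lt.1 fun hlt => ?_)
    obtain ⟨-, hlk, hev⟩ := mem_candidates.1 hlmem
    obtain ⟨v, hv⟩ := Option.isSome_iff_exists.1 hev
    exact hbelow l hlk hlt (Part.dom_iff_mem.2 ⟨v, evaln_sound hv⟩)
  simp [guess, hl, Option.mem_def.1 hts]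

section Computability

open Primrec

variable (k c)

theorem primrec_candidates : Primrec₂ (candidates k c) :=
  (list_filter (list_map (list_range.comp (succ.comp snd)) ((Primrec.ofNat (List ℕ)).comp snd).to₂)
    (Primrec.and.comp (Primrec.eq.decide.comp (list_length.comp snd) (const k))
      (option_isSome.comp (primrec_evaln.comp
        (pair (pair (snd.comp fst) (const c))
          (Primrec₂.natPair.comp (fst.comp fst) (Primrec.encode.comp snd)))))).to₂).to₂

theorem primrec_approx : Primrec₂ (approx k c) :=
  list_min?.comp (primrec_candidates k c)

theorem primrec_guess : Primrec₂ (guess k c) :=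
  (option_getD.comp (option_bind (primrec_approx k c) (primrec_evaln.comp
    (pair (pair (snd.comp fst) (const c))
      (Primrec₂.natPair.comp (fst.comp fst) (Primrec.encode.comp snd)))).to₂) (const 0)).to₂

end Computability

end OmegaApprox

namespace BoundedJump

open OmegaApprox

variable (k : ℕ) (c : Code)

def useAt (x i s : ℕ) : Option ℕ :=
  (evaln s (ofNat Code i) x).bind fun u => if ∀ m ≤ u, (approx k c m s).isSome then some u else none

def uses (x s : ℕ) : List ℕ := (List.range (x + 1)).filterMap (useAt k c x · s)

def pending (x s : ℕ) : ℕ := (List.range (x + 1)).countP fun i => (useAt k c x i s).isNone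

def oracleSeg (u n s : ℕ) : List ℕ := (List.range n).map fun m => if m ≤ u then guess k c m s else 0

def Seen (x s : ℕ) : Prop :=
  ∃ u ∈ uses k c x s, ∃ n ≤ s,
    (evaln s (ofNat Code x) (Nat.pair (encode (oracleSeg k c u n s)) x)).isSome

instance (x s : ℕ) : Decidable (Seen k c x s) := inferInstanceAs (Decidable (∃ _ ∈ _, _))

def relevant (x s : ℕ) : List ℕ := (uses k c x s).flatMap fun u => List.range (u + 1)

def weight (x s : ℕ) : List ℕ :=
  ((relevant k c x s).map fun m => (approx k c m s).getD []).foldr (List.zipWith (· + ·))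
    (List.replicate k 0)

def counter (x s : ℕ) : List ℕ :=
  List.markLast (if Seen k c x s then 0 else 1) (pending k c x s :: weight k c x s)

def readBit (l : List ℕ) : ℕ := 1 - l.reverse.headI % 2

variable {k c} {x s t : ℕ}

theorem useAt_eq_some {i u : ℕ} : useAt k c x i s = some u ↔
    u ∈ evaln s (ofNat Code i) x ∧ ∀ m ≤ u, (approx k c m s).isSome := by
  simp [useAt, Option.bind_eq_some_iff, Option.mem_def]

theorem mem_uses {u : ℕ} : u ∈ uses k c x s ↔ ∃ i ≤ x, useAt k c x i s = some u := by
  simp [uses]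

theorem useAt_mono {i u : ℕ} (hst : s ≤ t) (h : useAt k c x i s = some u) :
    useAt k c x i t = some u := by
  obtain ⟨hu, happrox⟩ := useAt_eq_some.1 h
  refine useAt_eq_some.2 ⟨evaln_mono hst hu, fun m hm => ?_⟩
  obtain ⟨l, hl⟩ := Option.isSome_iff_exists.1 (happrox m hm)
  obtain ⟨l', hl', -⟩ := exists_approx_le hst hl
  simp [hl']

theorem isSome_approx_of_mem_relevant {m : ℕ} (hm : m ∈ relevant k c x s) :
    (approx k c m s).isSome := by
  obtain ⟨u, hu, hmu⟩ := List.mem_flatMap.1 hm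
  obtain ⟨i, -, hi⟩ := mem_uses.1 hu
  exact (useAt_eq_some.1 hi).2 m (Nat.lt_succ_iff.1 (List.mem_range.1 hmu))

theorem length_approx_getD_of_mem_relevant {m : ℕ} (hm : m ∈ relevant k c x s) :
    ((approx k c m s).getD []).length = k := by
  obtain ⟨l, hl⟩ := Option.isSome_iff_exists.1 (isSome_approx_of_mem_relevant hm)
  simpa [hl] using length_of_approx_eq_some hl

theorem length_weight : (weight k c x s).length = k :=
  List.length_foldr_zipWith_add _ (by simpa using fun m hm => length_approx_getD_of_mem_relevant hm)

theorem length_counter : (counter k c x s).length = k + 1 := by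
  simp [counter, length_weight]

theorem weight_succ_lt_or_eq (huses : uses k c x (s + 1) = uses k c x s) :
    weight k c x (s + 1) < weight k c x s ∨
      ∀ m ∈ relevant k c x s, approx k c m (s + 1) = approx k c m s := by
  have hrel : relevant k c x (s + 1) = relevant k c x s := by rw [relevant, relevant, huses]
  have hle : ∀ m ∈ relevant k c x s,
      ∃ l l', approx k c m s = some l ∧ approx k c m (s + 1) = some l' ∧ l' ≤ l := fun m hm => by
    obtain ⟨l, hl⟩ := Option.isSome_iff_exists.1 (isSome_approx_of_mem_relevant hm)
    obtain ⟨l', hl', hle⟩ := exists_approx_le s.le_succ hl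
    exact ⟨l, l', hl, hl', hle⟩
  rw [weight, weight, hrel]
  refine (List.foldr_zipWith_add_lt_or_eq (fun m hm => length_approx_getD_of_mem_relevant hm)
    (fun m hm => length_approx_getD_of_mem_relevant (by rwa [hrel])) fun m hm => ?_).imp_right
    fun h m hm => ?_
  · obtain ⟨l, l', hl, hl', hle⟩ := hle m hm
    simpa [hl, hl'] using hle
  · obtain ⟨l, l', hl, hl', -⟩ := hle m hm
    simpa [hl, hl'] using h m hm

theorem seen_succ (huses : uses k c x (s + 1) = uses k c x s)
    (happrox : ∀ m ∈ relevant k c x s, approx k c m (s + 1) = approx k c m s)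
    (h : Seen k c x s) : Seen k c x (s + 1) := by
  obtain ⟨u, hu, n, hn, hev⟩ := h
  have hseg : oracleSeg k c u n (s + 1) = oracleSeg k c u n s := by
    refine List.map_congr_left fun m _ => ?_
    split_ifs with hmu
    · exact guess_succ_of_approx_succ
        (happrox m (List.mem_flatMap.2 ⟨u, hu, by simpa [Nat.lt_succ_iff]⟩))
    · rfl
  obtain ⟨v, hv⟩ := Option.isSome_iff_exists.1 hev
  exact ⟨u, huses ▸ hu, n, hn.trans s.le_succ, by rw [hseg, evaln_mono s.le_succ hv]; rfl⟩

theorem counter_succ_le : counter k c x (s + 1) ≤ counter k c x s := by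
  have hlen : (pending k c x (s + 1) :: weight k c x (s + 1)).length =
      (pending k c x s :: weight k c x s).length := by simp [length_weight]
  have hbit : (if Seen k c x (s + 1) then 0 else 1) ≤ 1 := by split_ifs <;> omega
  rcases List.countP_isNone_lt_or_eq (L := List.range (x + 1))
    (fun i _ u h => useAt_mono s.le_succ h) with hlt | heq
  · exact (List.markLast_lt_markLast hbit hlen (List.cons_lt_cons_iff.2 (.inl hlt))).le
  have huses : uses k c x (s + 1) = uses k c x s := List.filterMap_congr heq
  have hpend : pending k c x (s + 1) = pending k c x s :=
    List.countP_congr fun i hi => by rw [heq i hi]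
  rcases weight_succ_lt_or_eq huses with hlt | happrox
  · exact (List.markLast_lt_markLast hbit hlen (List.cons_lt_cons_iff.2 (.inr ⟨hpend, hlt⟩))).le
  have hweight : weight k c x (s + 1) = weight k c x s := by
    have hrel : relevant k c x (s + 1) = relevant k c x s := by rw [relevant, relevant, huses]
    rw [weight, weight, hrel, List.map_congr_left fun m hm => by rw [happrox m hm]]
  rw [counter, counter, hpend, hweight]
  refine List.markLast_le_markLast ?_ _
  by_cases h : Seen k c x s
  · simp [h, seen_succ huses happrox h]
  · split_ifs <;> omega

theorem counter_antitone (x : ℕ) : Antitone (counter k c x) :=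
  antitone_nat_of_succ_le fun _ => counter_succ_le

theorem readBit_counter : readBit (counter k c x s) = if Seen k c x s then 1 else 0 := by
  rw [readBit, counter, List.reverse_headI_markLast _ (List.cons_ne_nil _ _)]
  split_ifs <;> omega

variable {A : Set ℕ}

theorem oracleSeg_eq_initSeg {u n : ℕ} (h : ∀ m ≤ u, guess k c m s = chi A m) :
    oracleSeg k c u n s = initSeg (restrictTo A u) n :=
  List.map_congr_left fun m _ => by
    rw [chi_restrictTo]
    split_ifs with hm
    exacts [h m hm, rfl]

theorem mem_bJump_of_seen
    (hguess : ∀ i ≤ x, ∀ u, useAt k c x i s = some u → ∀ m ≤ u, guess k c m s = chi A m)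
    (h : Seen k c x s) : x ∈ bJump A := by
  obtain ⟨u, hu, n, -, hev⟩ := h
  obtain ⟨i, hi, hiu⟩ := mem_uses.1 hu
  have hui : u ∈ phi i x := evaln_sound (useAt_eq_some.1 hiu).1
  obtain ⟨v, hv⟩ := Option.isSome_iff_exists.1 hev
  rw [oracleSeg_eq_initSeg (hguess i hi u hiu)] at hv
  refine ⟨i, hi, Part.dom_iff_mem.2 ⟨u, hui⟩, ?_⟩
  rw [Part.get_eq_of_mem hui]
  exact ⟨n, Part.dom_iff_mem.2 ⟨v, evaln_sound hv⟩⟩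

theorem eventually_guess_eq_of_useAt (hA : OmegaApprox k c.eval A) (x : ℕ) :
    ∀ᶠ s in atTop, ∀ i ≤ x, ∀ u, useAt k c x i s = some u → ∀ m ≤ u, guess k c m s = chi A m := by
  refine eventually_forall_le_atTop (fun i => ?_) x
  by_cases hi : (phi i x).Dom
  · filter_upwards [eventually_forall_le_atTop (fun m => (eventually_guess_eq hA m).mono
      fun _ h => h.2) ((phi i x).get hi)] with s hs u hu
    rwa [Part.mem_unique (evaln_sound (useAt_eq_some.1 hu).1) (Part.get_mem hi)]
  · exact .of_forall fun s u hu =>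
      absurd (Part.dom_iff_mem.2 ⟨u, evaln_sound (useAt_eq_some.1 hu).1⟩) hi

theorem eventually_seen_of_mem (hA : OmegaApprox k c.eval A) (hx : x ∈ bJump A) :
    ∀ᶠ s in atTop, Seen k c x s := by
  obtain ⟨i, hi, hdom, n, hn⟩ := hx
  obtain ⟨t₁, ht₁⟩ := evaln_complete.1 (Part.get_mem hdom)
  obtain ⟨v, hv⟩ := Part.dom_iff_mem.1 hn
  obtain ⟨t₂, ht₂⟩ := evaln_complete.1 hv
  filter_upwards [eventually_forall_le_atTop (eventually_guess_eq hA) ((phi i x).get hdom),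
    eventually_ge_atTop (max n (max t₁ t₂))] with s hs hst
  refine ⟨_, mem_uses.2 ⟨i, hi, useAt_eq_some.2 ⟨evaln_mono (by omega) ht₁,
    fun m hm => (hs m hm).1⟩⟩, n, by omega, ?_⟩
  rw [oracleSeg_eq_initSeg fun m hm => (hs m hm).2]
  exact Option.isSome_iff_exists.2 ⟨v, evaln_mono (by omega) ht₂⟩

theorem eventually_readBit_counter (hA : OmegaApprox k c.eval A) (x : ℕ) :
    ∀ᶠ s in atTop, readBit (counter k c x s) = chi (bJump A) x := by
  by_cases hx : x ∈ bJump A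
  · filter_upwards [eventually_seen_of_mem hA hx] with s hs
    simp [readBit_counter, hs, chi, hx]
  · filter_upwards [eventually_guess_eq_of_useAt hA x] with s hs
    simp [readBit_counter, chi, hx, mt (mem_bJump_of_seen hs) hx]

section Computability

open Primrec

variable (k c)

theorem primrecRel_forall_le_isSome_approx :
    PrimrecRel fun u s => ∀ m ≤ u, (approx k c m s).isSome := by
  have h : PrimrecRel fun m s => (approx k c m s).isSome = true :=
    Primrec.eq.comp (option_isSome.comp (primrec_approx k c)) (const true)
  exact (h.forall_lt.comp (succ.comp fst) snd).of_eq fun p => by simp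

theorem primrec_useAt : Primrec fun q : (ℕ × ℕ) × ℕ => useAt k c q.1.1 q.2 q.1.2 :=
  option_bind (primrec_evaln.comp
      (pair (pair (snd.comp fst) ((Primrec.ofNat Code).comp snd)) (fst.comp fst)))
    (Primrec.ite ((primrecRel_forall_le_isSome_approx k c).comp snd (snd.comp (fst.comp fst)))
      (option_some.comp snd) (const none)).to₂

theorem primrec_uses : Primrec₂ (uses k c) :=
  (listFilterMap (list_range.comp (succ.comp fst)) (primrec_useAt k c).to₂).to₂

theorem primrec_pending : Primrec₂ (pending k c) :=
  (list_length.comp (list_filter (list_range.comp (succ.comp fst))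
    (Primrec.not.comp (option_isSome.comp (primrec_useAt k c))).to₂)).to₂.of_eq fun x s => by
      simp [pending, List.countP_eq_length_filter]

theorem primrec_oracleSeg : Primrec fun q : (ℕ × ℕ) × ℕ => oracleSeg k c q.1.1 q.1.2 q.2 :=
  list_map (list_range.comp (snd.comp fst))
    (Primrec.ite (nat_le.comp snd (fst.comp (fst.comp fst)))
      ((primrec_guess k c).comp snd (snd.comp fst)) (const 0)).to₂

theorem primrecRel_seen : PrimrecRel (Seen k c) := by
  have hconv : PrimrecRel fun (n : ℕ) (q : ℕ × ℕ × ℕ) =>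
      (evaln q.2.2 (ofNat Code q.2.1)
        (Nat.pair (encode (oracleSeg k c q.1 n q.2.2)) q.2.1)).isSome = true :=
    Primrec.eq.comp (option_isSome.comp (primrec_evaln.comp
      (pair (pair (snd.comp (snd.comp snd)) ((Primrec.ofNat Code).comp (fst.comp (snd.comp snd))))
        (Primrec₂.natPair.comp (Primrec.encode.comp ((primrec_oracleSeg k c).comp
          (pair (pair (fst.comp snd) fst) (snd.comp (snd.comp snd)))))
          (fst.comp (snd.comp snd)))))) (const true)
  have hexists : PrimrecRel fun (u : ℕ) (xs : ℕ × ℕ) => ∃ n ≤ xs.2,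
      (evaln xs.2 (ofNat Code xs.1)
        (Nat.pair (encode (oracleSeg k c u n xs.2)) xs.1)).isSome = true :=
    (hconv.exists_mem_list.comp (list_range.comp (succ.comp (snd.comp snd))) Primrec.id).of_eq
      fun p => by simp
  exact (hexists.exists_mem_list.comp (primrec_uses k c) Primrec.id).of_eq fun p => Iff.rfl

theorem primrec_weight : Primrec₂ (weight k c) :=
  (list_foldr (list_map (list_flatMap (primrec_uses k c) (list_range.comp (succ.comp snd)).to₂)
      (option_getD.comp ((primrec_approx k c).comp snd (snd.comp fst)) (const [])).to₂)
    (const (List.replicate k 0))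
    ((list_zipWith nat_add).comp (fst.comp snd) (snd.comp snd)).to₂).to₂

theorem primrec_counter : Primrec₂ (counter k c) :=
  (list_markLast.comp (Primrec.ite (primrecRel_seen k c) (const 0) (const 1))
    (list_cons.comp (primrec_pending k c) (primrec_weight k c))).to₂

theorem primrec_readBit : Primrec readBit :=
  nat_sub.comp (const 1) (nat_mod.comp (list_headI.comp list_reverse) (const 2))

end Computability

end BoundedJump

theorem bJump_omegaCE_succ_general (k : ℕ) (A : Set ℕ) (hA : OmegaCE k A) :
    OmegaCE (k + 1) (bJump A) := by
  obtain ⟨ψ, hψ, -, hA⟩ := hA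
  obtain ⟨c, rfl⟩ := Nat.Partrec.Code.exists_code.1 (Partrec.nat_iff.1 hψ)
  exact omegaCE_of_antitone (BoundedJump.primrec_counter k c).to_comp
    BoundedJump.primrec_readBit.to_comp (fun _ => Nat.sub_le 1 _)
    (fun _ _ => BoundedJump.length_counter) BoundedJump.counter_antitone
    (BoundedJump.eventually_readBit_counter hA)

/-- If `k > 0` and `A` is `ω^k`-c.e., then `A^b` is `ω^{k+1}`-c.e. -/
theorem bJump_omegaCE_succ (k : ℕ) (hk : 0 < k) (A : Set ℕ) (hA : OmegaCE k A) :
    OmegaCE (k + 1) (bJump A) :=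
  bJump_omegaCE_succ_general k A hA
end

section
/- For any set A ⊆ ℕ, Gerla's truth-table jump A_tt is 1-reducible to A^{b₀}. -/
/-!
A tt-condition reads its oracle only at positions up to `b = max xᵢ`, and `b` is computable from
a code of the condition. Hence `x ∈ A_tt` iff `⟨e, i, x⟩ ∈ A^{b₀}`, where `φ_i(x)` is the bound `b`
of the condition `φ_x(x)` (diverging if it is not well formed) and `Φ_e` halts on `x` exactly when
an oracle string covering the positions `≤ b` satisfies `φ_x(x)`: on `A↾b` such a string agrees
with `A`. Only the partial computability of `x ↦ φ_x(x)` is used.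
-/

open Classical

theorem Part.exists_dom_get_iff {α : Type*} {o : Part α} {P : α → Prop} :
    (∃ h : o.Dom, P (o.get h)) ↔ ∃ a ∈ o, P a :=
  ⟨fun ⟨h, hP⟩ => ⟨_, Part.get_mem h, hP⟩, fun ⟨_, ⟨h, ha⟩, hP⟩ => ⟨h, ha ▸ hP⟩⟩

theorem exists_phi_eq {f : ℕ →. ℕ} (hf : Partrec f) : ∃ i, phi i = f := by
  obtain ⟨c, hc⟩ := Nat.Partrec.Code.exists_code.1 (Partrec.nat_iff.1 hf)
  exact ⟨Encodable.encode c, by rw [phi, Denumerable.ofNat_encode, hc]⟩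

theorem partrec_phi_diag : Partrec fun x => phi x x :=
  Nat.Partrec.Code.eval_part.comp (Computable.ofNat _) Computable.id

theorem Phi_dom_iff {e x : ℕ} {B : Set ℕ} :
    (Phi e B x).Dom ↔ ∃ n, (phi e (Nat.pair (Encodable.encode (initSeg B n)) x)).Dom :=
  Iff.rfl

theorem length_initSeg (A : Set ℕ) (n : ℕ) : (initSeg A n).length = n := by
  simp [initSeg]

theorem getD_initSeg_restrictTo {A : Set ℕ} {b n y : ℕ} (hyb : y ≤ b) (hbn : b < n) :
    (initSeg (restrictTo A b) n).getD y 0 = chi A y := by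
  have hyn : y < (initSeg (restrictTo A b) n).length := by rw [length_initSeg]; omega
  rw [List.getD_eq_getElem _ _ hyn]
  simp [initSeg, chi, restrictTo, hyb]

theorem pair_mem_b0Jump_iff {A : Set ℕ} {e i j : ℕ} :
    Nat.pair e (Nat.pair i j) ∈ b0Jump A ↔ ∃ b ∈ phi i j, (Phi e (restrictTo A b) j).Dom := by
  constructor
  · rintro ⟨e', i', j', hpair, hdom⟩
    simp only [Nat.pair_eq_pair] at hpair
    obtain ⟨rfl, rfl, rfl⟩ := hpair
    exact Part.exists_dom_get_iff.1 hdom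
  · exact fun h => ⟨e, i, j, rfl, Part.exists_dom_get_iff.2 h⟩

theorem gerlaJump_eq (A : Set ℕ) : gerlaJump A = {x | ∃ c ∈ phi x x, ttSatisfied A c} :=
  Set.ext fun _ => Part.exists_dom_get_iff

namespace TTCondition

open Encodable Denumerable

def maxPos (p : List ℕ × List Bool) : ℕ := p.1.foldr max 0

def value (p : List ℕ × List Bool) (f : ℕ → ℕ) : Bool :=
  p.2.getD (p.1.foldr (fun x acc => 2 * acc + f x) 0) false

def AcceptsString (p : List ℕ × List Bool) (σ : List ℕ) : Prop :=
  maxPos p < σ.length ∧ value p (σ.getD · 0) = true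

instance : DecidableRel AcceptsString := fun _ _ => instDecidableAnd

def boundOfCode (c : ℕ) : Option ℕ :=
  (decode c : Option (List ℕ × List Bool)).bind fun p =>
    if p.2.length = 2 ^ p.1.length then some (maxPos p) else none

/- Well-formedness of the truth table is not checked here: `boundOfCode` already rejects
ill-formed conditions, and the reduction queries both. -/
def acceptOfCode (σ : List ℕ) (c : ℕ) : Option ℕ :=
  (decode c : Option (List ℕ × List Bool)).bind fun p =>
    if AcceptsString p σ then some 0 else none

theorem le_maxPos {p : List ℕ × List Bool} {y : ℕ} (hy : y ∈ p.1) : y ≤ maxPos p :=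
  List.le_max_of_le' 0 hy le_rfl

theorem value_congr {p : List ℕ × List Bool} {f g : ℕ → ℕ} (h : ∀ y ∈ p.1, f y = g y) :
    value p f = value p g := by
  unfold value
  rw [List.foldr_ext _ _ _ fun y hy acc => by rw [h y hy]]

theorem acceptsString_initSeg_restrictTo_iff (A : Set ℕ) (p : List ℕ × List Bool) (n : ℕ) :
    AcceptsString p (initSeg (restrictTo A (maxPos p)) n) ↔
      maxPos p < n ∧ value p (chi A) = true := by
  simp only [AcceptsString, length_initSeg, and_congr_right_iff]
  intro hn
  rw [value_congr fun y hy => getD_initSeg_restrictTo (le_maxPos hy) hn]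

theorem primrec_maxPos : Primrec maxPos :=
  Primrec.list_foldr Primrec.fst (Primrec.const 0)
    (Primrec.nat_max.comp (Primrec.fst.comp Primrec.snd) (Primrec.snd.comp Primrec.snd)).to₂

theorem primrecRel_acceptsString : PrimrecRel AcceptsString := by
  have hfold : Primrec fun a : (List ℕ × List Bool) × List ℕ =>
      a.1.1.foldr (fun y acc => 2 * acc + a.2.getD y 0) 0 :=
    Primrec.list_foldr (Primrec.fst.comp Primrec.fst) (Primrec.const 0)
      (Primrec.nat_add.comp (Primrec.nat_mul.comp (Primrec.const 2) (Primrec.snd.comp Primrec.snd))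
        ((Primrec.list_getD 0).comp (Primrec.snd.comp Primrec.fst)
          (Primrec.fst.comp Primrec.snd))).to₂
  exact (Primrec.nat_lt.comp (primrec_maxPos.comp Primrec.fst)
    (Primrec.list_length.comp Primrec.snd)).and
    (Primrec.eq.comp ((Primrec.list_getD false).comp (Primrec.snd.comp Primrec.fst) hfold)
      (Primrec.const true))

theorem primrec_boundOfCode : Primrec boundOfCode :=
  Primrec.option_bind Primrec.decode <| Primrec.ite
    (Primrec.eq.comp (Primrec.list_length.comp (Primrec.snd.comp Primrec.snd))
      ((Primrec₂.unpaired'.1 Nat.Primrec.pow).comp (Primrec.const 2)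
        (Primrec.list_length.comp (Primrec.fst.comp Primrec.snd))))
    (Primrec.option_some.comp (primrec_maxPos.comp Primrec.snd)) (Primrec.const none)

theorem primrec₂_acceptOfCode : Primrec₂ acceptOfCode :=
  Primrec.option_bind (Primrec.decode.comp Primrec.snd) <| Primrec.ite
    (primrecRel_acceptsString.comp Primrec.snd (Primrec.fst.comp Primrec.fst))
    (Primrec.const (some 0)) (Primrec.const none)

variable (g : ℕ →. ℕ)

def boundMachine : ℕ →. ℕ := fun x => (g x).bind fun c => boundOfCode c

/- The program of the Turing functional `Φ_e` of the reduction: on `⟨σ, x⟩` it reads the oracle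
string `σ` (as `Phi` presents it) and halts iff `σ` satisfies the condition `g x`. -/
def acceptMachine : ℕ →. ℕ := fun m =>
  (g m.unpair.2).bind fun c => acceptOfCode (ofNat (List ℕ) m.unpair.1) c

variable {g}

theorem partrec_boundMachine (hg : Partrec g) : Partrec (boundMachine g) :=
  hg.bind (Computable.ofOption (primrec_boundOfCode.to_comp.comp Computable.snd)).to₂

theorem partrec_acceptMachine (hg : Partrec g) : Partrec (acceptMachine g) :=
  (hg.comp (Primrec.snd.comp Primrec.unpair).to_comp).bind
    (Computable.ofOption (primrec₂_acceptOfCode.to_comp.comp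
      ((Computable.ofNat _).comp ((Primrec.fst.comp Primrec.unpair).to_comp.comp Computable.fst))
      Computable.snd)).to₂

theorem mem_boundMachine_iff {x b : ℕ} :
    b ∈ boundMachine g x ↔ ∃ c ∈ g x, ∃ p : List ℕ × List Bool, decode c = some p ∧
      p.2.length = 2 ^ p.1.length ∧ maxPos p = b := by
  simp only [boundMachine, boundOfCode, Part.mem_bind_iff, Part.mem_ofOption, Option.mem_def,
    Option.bind_eq_some_iff, Option.ite_none_right_eq_some, Option.some_inj]

theorem acceptMachine_pair_dom_iff {σ : List ℕ} {x : ℕ} :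
    (acceptMachine g (Nat.pair (encode σ) x)).Dom ↔
      ∃ c ∈ g x, ∃ p : List ℕ × List Bool, decode c = some p ∧ AcceptsString p σ := by
  simp only [acceptMachine, Nat.unpair_pair, ofNat_encode, Part.dom_iff_mem, Part.mem_bind_iff,
    Part.mem_ofOption, acceptOfCode, Option.mem_def, Option.bind_eq_some_iff,
    Option.ite_none_right_eq_some]
  exact ⟨fun ⟨_, c, hc, p, hp, h, _⟩ => ⟨c, hc, p, hp, h⟩,
    fun ⟨c, hc, p, hp, h⟩ => ⟨0, c, hc, p, hp, h, rfl⟩⟩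

theorem exists_mem_boundMachine_acceptMachine_dom_iff (A : Set ℕ) (x : ℕ) :
    (∃ b ∈ boundMachine g x, ∃ n,
        (acceptMachine g (Nat.pair (encode (initSeg (restrictTo A b) n)) x)).Dom) ↔
      ∃ c ∈ g x, ttSatisfied A c := by
  simp only [acceptMachine_pair_dom_iff]
  constructor
  · rintro ⟨b, hb, n, c', hc', p', hp', hacc⟩
    obtain ⟨c, hc, p, hp, hwf, rfl⟩ := mem_boundMachine_iff.1 hb
    obtain rfl := Part.mem_unique hc hc'
    obtain rfl := Option.some_inj.1 (hp.symm.trans hp')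
    exact ⟨c, hc, p, hp, hwf, ((acceptsString_initSeg_restrictTo_iff A p n).1 hacc).2⟩
  · rintro ⟨c, hc, p, hp, hwf, hval⟩
    exact ⟨maxPos p, mem_boundMachine_iff.2 ⟨c, hc, p, hp, hwf, rfl⟩, maxPos p + 1, c, hc, p, hp,
      (acceptsString_initSeg_restrictTo_iff A p _).2 ⟨lt_add_one _, hval⟩⟩

end TTCondition

open TTCondition in
theorem oneReducible_b0Jump_of_partrec (A : Set ℕ) {g : ℕ →. ℕ} (hg : Partrec g) :
    oneReducible {x | ∃ c ∈ g x, ttSatisfied A c} (b0Jump A) := by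
  obtain ⟨i, hi⟩ := exists_phi_eq (partrec_boundMachine hg)
  obtain ⟨e, he⟩ := exists_phi_eq (partrec_acceptMachine hg)
  refine ⟨fun x => Nat.pair e (Nat.pair i x), ?_, ?_, fun x => ?_⟩
  · exact (Primrec₂.natPair.comp (Primrec.const e)
      (Primrec₂.natPair.comp (Primrec.const i) Primrec.id)).to_comp
  · intro x y h
    simpa using h
  · simp only [pair_mem_b0Jump_iff, Phi_dom_iff, hi, he]
    exact (exists_mem_boundMachine_acceptMachine_dom_iff A x).symm

/-- For any set `A`, Gerla's truth-table jump `A_tt` is 1-reducible to `A^{b₀}`. -/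
theorem gerlaJump_oneReducible_b0Jump (A : Set ℕ) :
    oneReducible (gerlaJump A) (b0Jump A) := by
  rw [gerlaJump_eq]
  exact oneReducible_b0Jump_of_partrec A partrec_phi_diag
end
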